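/- arXiv:2406.04171 — 2 statements merged into one kernel-verified Lean document; each statement's English description precedes it below -/
import Mathlib

section
/- Let p, q ≥ 1 with n = p+q ≥ 5, and let g : (0,∞) → ℝ be smooth. Define f_{k,μ} := e^A_{k,μ}·I_{p,q}, X_μ(x) := Σ_{k=1}^n x_k f_{k,μ}, and B_μ(x) := g(‖x‖)·X_μ(x) for x ∈ M_{p,q}. Then B satisfies the Yang–Mills equations for the metric I_{p,q} on M_{p,q} if and only if for every r > 0: g''(r) + (n+1)·g'(r)/r + (n−2)·g(r)²·(3 − r² g(r)) = 0. -/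
open Matrix BigOperators

noncomputable section

attribute [local instance] Matrix.normedAddCommGroup Matrix.normedSpace

/-- `I_{p,q} = diag(1,…,1,−1,…,−1)` with `p` ones and `q` minus-ones. -/
def Ipq (p q : ℕ) : Matrix (Fin (p + q)) (Fin (p + q)) ℝ :=
  Matrix.diagonal fun i => if (i : ℕ) < p then 1 else -1

/-- The quadratic form `xᵀ I_{p,q} x`. -/
def qform (p q : ℕ) (x : Fin (p + q) → ℝ) : ℝ := x ⬝ᵥ (Ipq p q *ᵥ x)

/-- `‖x‖ = √(xᵀ I_{p,q} x)` for timelike `x`. -/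
def pqnorm (p q : ℕ) (x : Fin (p + q) → ℝ) : ℝ := Real.sqrt (qform p q x)

/-- `ε(i)`. -/
def epsP (p : ℕ) {n : ℕ} (i : Fin n) : ℝ := if (i : ℕ) < p then 1 else -1

/-- `e^A_{i,j} = e_i e_jᵀ − e_j e_iᵀ`. -/
def eA {n : ℕ} (i j : Fin n) : Matrix (Fin n) (Fin n) ℝ :=
  Matrix.single i j 1 - Matrix.single j i 1

/-- `f_{k,μ} := e^A_{k,μ} · I_{p,q}`. -/
def fpq (p q : ℕ) (k μ : Fin (p + q)) : Matrix (Fin (p + q)) (Fin (p + q)) ℝ :=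
  eA k μ * Ipq p q

/-- `X_μ(x) := Σ_k x_k f_{k,μ}`. -/
def Xpq (p q : ℕ) (x : Fin (p + q) → ℝ) (μ : Fin (p + q)) :
    Matrix (Fin (p + q)) (Fin (p + q)) ℝ :=
  ∑ k, x k • fpq p q k μ

/-- The curvature `F_{α,β} = ∂B_β/∂x_α − ∂B_α/∂x_β + [B_α, B_β]`. -/
def curv (n : ℕ) (B : (Fin n → ℝ) → Fin n → Matrix (Fin n) (Fin n) ℝ)
    (α β : Fin n) (x : Fin n → ℝ) : Matrix (Fin n) (Fin n) ℝ :=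
  fderiv ℝ (fun y => B y β) x (Pi.single α 1)
    - fderiv ℝ (fun y => B y α) x (Pi.single β 1)
    + (B x α * B x β - B x β * B x α)

/-- The Yang–Mills equations for the metric `I_{p,q}` on the timelike region:
`Σ_β ε(β)·([B_β, F_{α,β}] + ∂F_{α,β}/∂x_β) = 0`. -/
def YangMillsPQ (p q : ℕ)
    (B : (Fin (p + q) → ℝ) → Fin (p + q) → Matrix (Fin (p + q)) (Fin (p + q)) ℝ) : Prop :=
  ∀ (α : Fin (p + q)) (x : Fin (p + q) → ℝ), 0 < qform p q x →
    ∑ β, epsP p β • ((B x β * curv (p + q) B α β x - curv (p + q) B α β x * B x β)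
      + fderiv ℝ (fun y => curv (p + q) B α β y) x (Pi.single β 1)) = 0

namespace YM
variable {p q : ℕ}

lemma vmv_mul {n : ℕ} (a b c d : Fin n → ℝ) :
    vecMulVec a b * vecMulVec c d = (b ⬝ᵥ c) • vecMulVec a d := by
  ext i j
  simp [vecMulVec_apply, Matrix.mul_apply, dotProduct, Finset.sum_mul, Finset.mul_sum]
  congr 1; ext k; ring

lemma epsP_sq (i : Fin (p + q)) : epsP p i * epsP p i = 1 := by
  unfold epsP; split_ifs <;> norm_num

lemma epsP_ne (i : Fin (p + q)) : epsP p i ≠ 0 := by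
  unfold epsP; split_ifs <;> norm_num

lemma mulVec_Ipq (x : Fin (p + q) → ℝ) (i : Fin (p + q)) :
    (Ipq p q *ᵥ x) i = epsP p i * x i := by
  simp [Ipq, epsP, Matrix.mulVec_diagonal]

lemma std_mul_Ipq (i j a b : Fin (p + q)) :
    (Matrix.single i j (1:ℝ) * Ipq p q) a b
      = if i = a ∧ j = b then epsP p b else 0 := by
  rw [Ipq, Matrix.mul_diagonal]
  by_cases h : i = a ∧ j = b <;> simp [Matrix.single, h, epsP]

lemma fpq_apply (k μ a b : Fin (p + q)) :
    fpq p q k μ a b = (if k = a ∧ μ = b then epsP p μ else 0)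
      - (if μ = a ∧ k = b then epsP p k else 0) := by
  have h1 : (if k = a ∧ μ = b then epsP p b else 0) = (if k = a ∧ μ = b then epsP p μ else 0) := by
    by_cases h : k = a ∧ μ = b
    · rw [if_pos h, if_pos h, h.2]
    · rw [if_neg h, if_neg h]
  have h2 : (if μ = a ∧ k = b then epsP p b else 0) = (if μ = a ∧ k = b then epsP p k else 0) := by
    by_cases h : μ = a ∧ k = b
    · rw [if_pos h, if_pos h, h.2]
    · rw [if_neg h, if_neg h]
  rw [fpq, eA, Matrix.sub_mul, Matrix.sub_apply, std_mul_Ipq, std_mul_Ipq, h1, h2]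

lemma fpq_eq (α β : Fin (p + q)) :
    fpq p q α β = epsP p β • vecMulVec (Pi.single α 1) (Pi.single β 1)
      - epsP p α • vecMulVec (Pi.single β 1) (Pi.single α 1) := by
  ext a b
  rw [fpq_apply]
  simp only [Matrix.sub_apply, Matrix.smul_apply, vecMulVec_apply, smul_eq_mul,
    Pi.single_apply]
  by_cases h1 : α = a <;> by_cases h2 : β = b <;> by_cases h3 : β = a <;> by_cases h4 : α = b <;>
    simp [h1, h2, h3, h4, eq_comm] <;> (try split_ifs) <;> simp_all

lemma fpq_same (μ : Fin (p + q)) : fpq p q μ μ = 0 := by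
  ext a b; rw [fpq_apply]; simp

lemma Xpq_eq (x : Fin (p + q) → ℝ) (μ : Fin (p + q)) :
    Xpq p q x μ = epsP p μ • vecMulVec x (Pi.single μ 1)
      - vecMulVec (Pi.single μ 1) (Ipq p q *ᵥ x) := by
  ext a b
  rw [Xpq]
  simp only [Matrix.sum_apply, Matrix.smul_apply, Matrix.sub_apply, vecMulVec_apply,
    smul_eq_mul, Pi.single_apply, mulVec_Ipq]
  have : ∀ k ∈ Finset.univ, x k * fpq p q k μ a b
      = x k * ((if k = a ∧ μ = b then epsP p μ else 0) - (if μ = a ∧ k = b then epsP p k else 0)) := by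
    intro k _; rw [fpq_apply]
  rw [Finset.sum_congr rfl this]
  simp only [mul_sub, mul_ite, mul_zero, Finset.sum_sub_distrib, ite_and,
    Finset.sum_ite_irrel, Finset.sum_ite_eq, Finset.sum_ite_eq', Finset.mem_univ, if_true,
    Finset.sum_const_zero]
  simp only [eq_comm]
  split_ifs <;> simp_all <;> ring

end YM

namespace YM2
open YM
variable {p q : ℕ}

lemma qform_eq_sum (x : Fin (p + q) → ℝ) : qform p q x = ∑ i, x i * (epsP p i * x i) := by
  simp [qform, dotProduct, mulVec_Ipq]

lemma dot_single_right (v : Fin (p + q) → ℝ) (i : Fin (p + q)) : v ⬝ᵥ Pi.single i 1 = v i := by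
  simp
lemma dot_single_left (v : Fin (p + q) → ℝ) (i : Fin (p + q)) : Pi.single i 1 ⬝ᵥ v = v i := by
  simp
lemma single_dot_single (i j : Fin (p + q)) :
    Pi.single i (1:ℝ) ⬝ᵥ Pi.single j 1 = if i = j then 1 else 0 := by
  rw [dot_single_left, Pi.single_apply, eq_comm]
lemma w_dot_x (x : Fin (p + q) → ℝ) : (Ipq p q *ᵥ x) ⬝ᵥ x = qform p q x := by
  simp [qform_eq_sum, dotProduct, mulVec_Ipq]; congr 1; ext i; ring
lemma x_dot_w (x : Fin (p + q) → ℝ) : x ⬝ᵥ (Ipq p q *ᵥ x) = qform p q x := rfl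

lemma sum_smul_vmv_r (c f : Fin (p + q) → ℝ) :
    ∑ β, f β • vecMulVec c (Pi.single β (1:ℝ)) = vecMulVec c f := by
  ext a b
  simp [Matrix.sum_apply, vecMulVec_apply, Pi.single_apply, mul_ite, ite_mul,
    Finset.sum_ite_eq, Finset.sum_ite_eq']
  ring
lemma sum_smul_vmv_l (f c : Fin (p + q) → ℝ) :
    ∑ β, f β • vecMulVec (Pi.single β (1:ℝ)) c = vecMulVec f c := by
  ext a b
  simp [Matrix.sum_apply, vecMulVec_apply, Pi.single_apply, mul_ite, ite_mul,
    Finset.sum_ite_eq, Finset.sum_ite_eq']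
lemma sum_vmv_diag :
    ∑ β : Fin (p + q), vecMulVec (Pi.single β (1:ℝ)) (Pi.single β 1) = (1 : Matrix (Fin (p+q)) (Fin (p+q)) ℝ) := by
  ext a b
  simp [Matrix.sum_apply, vecMulVec_apply, Pi.single_apply, mul_ite, ite_mul,
    Finset.sum_ite_eq, Finset.sum_ite_eq', Matrix.one_apply, eq_comm]

/-- `S_{αβ}(x)`. -/
def Spq (p q : ℕ) (x : Fin (p + q) → ℝ) (α β : Fin (p + q)) :
    Matrix (Fin (p + q)) (Fin (p + q)) ℝ :=
  (epsP p α * x α) • Xpq p q x β - (epsP p β * x β) • Xpq p q x α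

lemma comm_XX (x : Fin (p + q) → ℝ) (α β : Fin (p + q)) :
    Xpq p q x α * Xpq p q x β - Xpq p q x β * Xpq p q x α
      = Spq p q x α β - qform p q x • fpq p q α β := by
  by_cases hab : α = β
  · subst hab; simp [Spq, fpq_same]
  · rw [Spq, Xpq_eq, Xpq_eq, fpq_eq]
    simp only [sub_mul, mul_sub, smul_mul_assoc, mul_smul_comm, vmv_mul, smul_smul,
      dot_single_right, dot_single_left, single_dot_single, w_dot_x, x_dot_w, mulVec_Ipq,
      if_neg hab, if_neg (Ne.symm hab), Pi.single_apply]
    match_scalars <;> ring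

lemma sum_x_fpq (x : Fin (p + q) → ℝ) (α : Fin (p + q)) :
    ∑ β, x β • fpq p q α β = - Xpq p q x α := by
  have h : ∀ β ∈ Finset.univ, x β • fpq p q α β
      = (Ipq p q *ᵥ x) β • vecMulVec (Pi.single α 1) (Pi.single β 1)
        - epsP p α • (x β • vecMulVec (Pi.single β 1) (Pi.single α 1)) := by
    intro β _
    rw [fpq_eq, mulVec_Ipq]
    match_scalars <;> ring
  rw [Finset.sum_congr rfl h, Finset.sum_sub_distrib, sum_smul_vmv_r, ← Finset.smul_sum,
    sum_smul_vmv_l, Xpq_eq]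
  module

lemma sum_x_Xpq (x : Fin (p + q) → ℝ) : ∑ β, x β • Xpq p q x β = 0 := by
  have h : ∀ β ∈ Finset.univ, x β • Xpq p q x β
      = (Ipq p q *ᵥ x) β • vecMulVec x (Pi.single β 1)
        - x β • vecMulVec (Pi.single β 1) (Ipq p q *ᵥ x) := by
    intro β _
    rw [Xpq_eq, mulVec_Ipq]
    match_scalars <;> ring
  rw [Finset.sum_congr rfl h, Finset.sum_sub_distrib, sum_smul_vmv_r, sum_smul_vmv_l, sub_self]

lemma sum_x_Spq (x : Fin (p + q) → ℝ) (α : Fin (p + q)) :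
    ∑ β, x β • Spq p q x α β = (-(qform p q x)) • Xpq p q x α := by
  have h : ∀ β ∈ Finset.univ, x β • Spq p q x α β
      = (epsP p α * x α) • (x β • Xpq p q x β) - (x β * (epsP p β * x β)) • Xpq p q x α := by
    intro β _
    rw [Spq]
    match_scalars <;> ring
  rw [Finset.sum_congr rfl h, Finset.sum_sub_distrib, ← Finset.smul_sum, sum_x_Xpq, smul_zero,
    ← Finset.sum_smul, ← qform_eq_sum]
  module

lemma sum_eps_comm_fpq (x : Fin (p + q) → ℝ) (α : Fin (p + q)) :
    ∑ β, epsP p β • (Xpq p q x β * fpq p q α β - fpq p q α β * Xpq p q x β)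
      = ((2:ℝ) - ((p + q : ℕ) : ℝ)) • Xpq p q x α := by
  have h : ∀ β ∈ Finset.univ, epsP p β • (Xpq p q x β * fpq p q α β - fpq p q α β * Xpq p q x β)
      = (if α = β then epsP p α else 0) • vecMulVec x (Pi.single β 1)
        - epsP p α • vecMulVec x (Pi.single α 1)
        + epsP p α • (x β • vecMulVec (Pi.single β 1) (Pi.single α 1))
        - (Ipq p q *ᵥ x) β • vecMulVec (Pi.single α 1) (Pi.single β 1)
        + vecMulVec (Pi.single α 1) (Ipq p q *ᵥ x)
        - (if α = β then (1:ℝ) else 0) • vecMulVec (Pi.single β 1) (Ipq p q *ᵥ x) := by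
    intro β _
    rw [Xpq_eq, fpq_eq]
    by_cases hab : α = β
    · subst hab
      simp only [sub_mul, mul_sub, smul_mul_assoc, mul_smul_comm, vmv_mul, smul_smul,
        dot_single_right, dot_single_left, single_dot_single, w_dot_x, x_dot_w, mulVec_Ipq,
        eq_self_iff_true, if_true, Pi.single_apply]
      by_cases ha : (α : ℕ) < p <;>
        simp only [epsP, ha, if_true, if_false] <;> match_scalars <;> ring
    · simp only [sub_mul, mul_sub, smul_mul_assoc, mul_smul_comm, vmv_mul, smul_smul,
        dot_single_right, dot_single_left, single_dot_single, w_dot_x, x_dot_w, mulVec_Ipq,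
        if_neg hab, if_neg (Ne.symm hab), Pi.single_apply]
      by_cases ha : (α : ℕ) < p <;> by_cases hb : (β : ℕ) < p <;>
        simp only [epsP, ha, hb, if_true, if_false] <;> match_scalars <;> ring
  rw [Finset.sum_congr rfl h]
  have t1 : ∑ β, (if α = β then epsP p α else 0) • vecMulVec x (Pi.single β (1:ℝ))
      = epsP p α • vecMulVec x (Pi.single α 1) := by
    simp [ite_smul, Finset.sum_ite_eq]
  have t3 : ∑ β, epsP p α • (x β • vecMulVec (Pi.single β (1:ℝ)) (Pi.single α 1))
      = epsP p α • vecMulVec x (Pi.single α 1) := by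
    rw [← Finset.smul_sum, sum_smul_vmv_l]
  have t6 : ∑ β, (if α = β then (1:ℝ) else 0) • vecMulVec (Pi.single β (1:ℝ)) (Ipq p q *ᵥ x)
      = vecMulVec (Pi.single α 1) (Ipq p q *ᵥ x) := by
    simp [ite_smul, Finset.sum_ite_eq]
  simp only [Finset.sum_add_distrib, Finset.sum_sub_distrib, t1, t3, t6, sum_smul_vmv_r,
    Finset.sum_const, Finset.card_univ, Fintype.card_fin]
  rw [Xpq_eq, ← Nat.cast_smul_eq_nsmul ℝ (p + q), ← Nat.cast_smul_eq_nsmul ℝ (p + q)]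
  match_scalars <;> ring

lemma sum_eps_comm_Spq (x : Fin (p + q) → ℝ) (α : Fin (p + q)) :
    ∑ β, epsP p β • (Xpq p q x β * Spq p q x α β - Spq p q x α β * Xpq p q x β) = 0 := by
  have h : ∀ β ∈ Finset.univ,
      epsP p β • (Xpq p q x β * Spq p q x α β - Spq p q x α β * Xpq p q x β)
      = x β • Spq p q x α β - qform p q x • (x β • fpq p q α β) := by
    intro β _
    have e : Xpq p q x β * Spq p q x α β - Spq p q x α β * Xpq p q x β
        = (epsP p β * x β) • (Xpq p q x α * Xpq p q x β - Xpq p q x β * Xpq p q x α) := by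
      simp only [Spq, sub_mul, mul_sub, smul_mul_assoc, mul_smul_comm]
      module
    rw [e, comm_XX, smul_sub, smul_sub, smul_smul, smul_smul, smul_smul]
    by_cases hb : (β : ℕ) < p <;> simp only [epsP, hb, if_true, if_false] <;>
      match_scalars <;> ring
  rw [Finset.sum_congr rfl h, Finset.sum_sub_distrib, sum_x_Spq, ← Finset.smul_sum, sum_x_fpq]
  module

lemma sum_DS (x : Fin (p + q) → ℝ) (α : Fin (p + q)) :
    ∑ β, epsP p β • ((if α = β then epsP p α else 0) • Xpq p q x β
        - epsP p β • Xpq p q x α + (epsP p β * x β) • fpq p q α β)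
      = (-((p + q : ℕ) : ℝ)) • Xpq p q x α := by
  have h : ∀ β ∈ Finset.univ, epsP p β • ((if α = β then epsP p α else 0) • Xpq p q x β
        - epsP p β • Xpq p q x α + (epsP p β * x β) • fpq p q α β)
      = (if α = β then epsP p β * epsP p α else 0) • Xpq p q x β
        - Xpq p q x α + x β • fpq p q α β := by
    intro β _
    rw [smul_add, smul_sub, smul_smul, smul_smul, smul_smul]
    by_cases hb : (β : ℕ) < p <;> simp only [epsP, hb, if_true, if_false] <;>
      match_scalars <;> (try split_ifs) <;> ring
  rw [Finset.sum_congr rfl h]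
  have t1 : ∑ β, (if α = β then epsP p β * epsP p α else 0) • Xpq p q x β
      = Xpq p q x α := by
    simp only [ite_smul, zero_smul, Finset.sum_ite_eq, Finset.mem_univ, if_true, epsP_sq,
      one_smul]
  simp only [Finset.sum_add_distrib, Finset.sum_sub_distrib, t1, sum_x_fpq,
    Finset.sum_const, Finset.card_univ, Fintype.card_fin]
  rw [← Nat.cast_smul_eq_nsmul ℝ (p + q)]
  module

noncomputable def dotCLM {n : ℕ} (w : Fin n → ℝ) : (Fin n → ℝ) →L[ℝ] ℝ :=
  ∑ i, w i • (ContinuousLinearMap.proj i : (Fin n → ℝ) →L[ℝ] ℝ)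

lemma dotCLM_apply {n : ℕ} (w v : Fin n → ℝ) : dotCLM w v = w ⬝ᵥ v := by
  simp [dotCLM, dotProduct, ContinuousLinearMap.sum_apply]

noncomputable def XCLM (p q : ℕ) (μ : Fin (p + q)) :
    (Fin (p + q) → ℝ) →L[ℝ] Matrix (Fin (p + q)) (Fin (p + q)) ℝ :=
  ∑ k, (ContinuousLinearMap.proj k : (Fin (p + q) → ℝ) →L[ℝ] ℝ).smulRight (fpq p q k μ)

lemma XCLM_apply (μ : Fin (p + q)) (v : Fin (p + q) → ℝ) : XCLM p q μ v = Xpq p q v μ := by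
  simp [XCLM, Xpq, ContinuousLinearMap.sum_apply]

lemma hasFDerivAt_Xpq (μ : Fin (p + q)) (x : Fin (p + q) → ℝ) :
    HasFDerivAt (fun y => Xpq p q y μ) (XCLM p q μ) x := by
  have h : ∀ k ∈ Finset.univ, HasFDerivAt (fun y : Fin (p + q) → ℝ => y k • fpq p q k μ)
      ((ContinuousLinearMap.proj k : (Fin (p + q) → ℝ) →L[ℝ] ℝ).smulRight (fpq p q k μ)) x :=
    fun k _ => (hasFDerivAt_apply k x).smul_const (fpq p q k μ)
  exact HasFDerivAt.fun_sum h

lemma hasFDerivAt_qform (x : Fin (p + q) → ℝ) :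
    HasFDerivAt (qform p q) ((2:ℝ) • dotCLM (Ipq p q *ᵥ x)) x := by
  have h : ∀ i ∈ Finset.univ, HasFDerivAt (fun y : Fin (p + q) → ℝ => y i * (epsP p i * y i))
      ((x i) • (epsP p i • (ContinuousLinearMap.proj i : (Fin (p + q) → ℝ) →L[ℝ] ℝ))
        + (epsP p i * x i) • (ContinuousLinearMap.proj i : (Fin (p + q) → ℝ) →L[ℝ] ℝ)) x :=
    fun i _ => (hasFDerivAt_apply i x).mul ((hasFDerivAt_apply i x).const_mul (epsP p i))
  have h2 := HasFDerivAt.fun_sum h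
  have e1 : (fun y => ∑ i, y i * (epsP p i * y i)) = qform p q := by
    ext y; rw [qform_eq_sum]
  rw [e1] at h2
  refine h2.congr_fderiv (Eq.symm ?_)
  ext v
  simp [dotCLM, ContinuousLinearMap.sum_apply, mulVec_Ipq, Finset.mul_sum]
  congr 1; ext i; ring

lemma hasFDerivAt_pqnorm {x : Fin (p + q) → ℝ} (hx : 0 < qform p q x) :
    HasFDerivAt (pqnorm p q) ((pqnorm p q x)⁻¹ • dotCLM (Ipq p q *ᵥ x)) x := by
  have h1 := Real.hasDerivAt_sqrt (ne_of_gt hx)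
  have h2 := h1.comp_hasFDerivAt x (hasFDerivAt_qform x)
  rw [show ((fun x => Real.sqrt x) ∘ qform p q) = pqnorm p q from rfl] at h2
  refine h2.congr_fderiv (Eq.symm ?_)
  rw [smul_smul]
  congr 1
  rw [pqnorm]
  have hs : Real.sqrt (qform p q x) ≠ 0 := by positivity
  field_simp

lemma hasFDerivAt_comp_pqnorm {φ : ℝ → ℝ} {φ' : ℝ} {x : Fin (p + q) → ℝ}
    (hx : 0 < qform p q x) (hφ : HasDerivAt φ φ' (pqnorm p q x)) :
    HasFDerivAt (fun y => φ (pqnorm p q y))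
      ((φ' / pqnorm p q x) • dotCLM (Ipq p q *ᵥ x)) x := by
  have h2 := hφ.comp_hasFDerivAt x (hasFDerivAt_pqnorm hx)
  refine h2.congr_fderiv (Eq.symm ?_)
  rw [smul_smul, div_eq_mul_inv]

lemma pqnorm_pos {x : Fin (p + q) → ℝ} (hx : 0 < qform p q x) : 0 < pqnorm p q x :=
  Real.sqrt_pos.mpr hx

lemma sq_pqnorm {x : Fin (p + q) → ℝ} (hx : 0 < qform p q x) :
    (pqnorm p q x) ^ 2 = qform p q x :=
  Real.sq_sqrt hx.le

lemma dotCLM_single {x : Fin (p + q) → ℝ} (β : Fin (p + q)) :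
    dotCLM (Ipq p q *ᵥ x) (Pi.single β 1) = epsP p β * x β := by
  rw [dotCLM_apply, dot_single_right, mulVec_Ipq]

lemma Xpq_single (γ μ : Fin (p + q)) : Xpq p q (Pi.single γ 1) μ = fpq p q γ μ := by
  rw [Xpq]
  simp [Pi.single_apply, ite_smul, Finset.sum_ite_eq]

lemma fpq_antisymm (α β : Fin (p + q)) : fpq p q β α = - fpq p q α β := by
  ext a b; simp only [Matrix.neg_apply, fpq_apply]; ring

lemma isOpen_U : IsOpen {y : Fin (p + q) → ℝ | 0 < qform p q y} := by
  have hc : Continuous (qform p q) := by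
    have e1 : qform p q = fun y => ∑ i, y i * (epsP p i * y i) := by
      ext y; rw [qform_eq_sum]
    rw [e1]; fun_prop
  exact isOpen_lt continuous_const hc

/-- Coefficient functions. -/
noncomputable def A2 (g : ℝ → ℝ) (s : ℝ) : ℝ := deriv g s / s + (g s) ^ 2
noncomputable def B2 (g : ℝ → ℝ) (s : ℝ) : ℝ := 2 * g s - s ^ 2 * (g s) ^ 2

noncomputable def Cfun (p q : ℕ) (g : ℝ → ℝ) (α β : Fin (p + q)) (y : Fin (p + q) → ℝ) :
    Matrix (Fin (p + q)) (Fin (p + q)) ℝ :=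
  A2 g (pqnorm p q y) • Spq p q y α β + B2 g (pqnorm p q y) • fpq p q α β

section main
variable {g : ℝ → ℝ}
  {B : (Fin (p + q) → ℝ) → Fin (p + q) → Matrix (Fin (p + q)) (Fin (p + q)) ℝ}

lemma hasFDerivAt_gX {x : Fin (p + q) → ℝ} (hx : 0 < qform p q x) {g1 : ℝ}
    (hd : HasDerivAt g g1 (pqnorm p q x)) (μ : Fin (p + q)) :
    HasFDerivAt (fun y => g (pqnorm p q y) • Xpq p q y μ)
      (g (pqnorm p q x) • XCLM p q μ
        + ((g1 / pqnorm p q x) • dotCLM (Ipq p q *ᵥ x)).smulRight (Xpq p q x μ)) x :=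
  (hasFDerivAt_comp_pqnorm hx hd).smul (hasFDerivAt_Xpq μ x)

lemma fderiv_B_single
    (hB : ∀ x, 0 < qform p q x → ∀ μ, B x μ = g (pqnorm p q x) • Xpq p q x μ)
    {x : Fin (p + q) → ℝ} (hx : 0 < qform p q x) {g1 : ℝ}
    (hd : HasDerivAt g g1 (pqnorm p q x)) (μ γ : Fin (p + q)) :
    fderiv ℝ (fun y => B y μ) x (Pi.single γ 1)
      = g (pqnorm p q x) • fpq p q γ μ
        + (g1 * (epsP p γ * x γ) / pqnorm p q x) • Xpq p q x μ := by
  have hev : (fun y => B y μ) =ᶠ[nhds x] (fun y => g (pqnorm p q y) • Xpq p q y μ) := by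
    filter_upwards [isOpen_U.mem_nhds hx] with y hy
    exact hB y hy μ
  rw [hev.fderiv_eq, (hasFDerivAt_gX hx hd μ).fderiv]
  simp only [ContinuousLinearMap.add_apply, ContinuousLinearMap.smul_apply,
    ContinuousLinearMap.smulRight_apply, XCLM_apply, Xpq_single, dotCLM_single]
  rw [smul_eq_mul]
  match_scalars <;> ring

lemma curv_eq
    (hB : ∀ x, 0 < qform p q x → ∀ μ, B x μ = g (pqnorm p q x) • Xpq p q x μ)
    {x : Fin (p + q) → ℝ} (hx : 0 < qform p q x)
    (hd : HasDerivAt g (deriv g (pqnorm p q x)) (pqnorm p q x)) (α β : Fin (p + q)) :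
    curv (p + q) B α β x = Cfun p q g α β x := by
  have hr : (0:ℝ) < pqnorm p q x := pqnorm_pos hx
  rw [curv, fderiv_B_single hB hx hd β α, fderiv_B_single hB hx hd α β, hB x hx α, hB x hx β]
  have hcomm : (g (pqnorm p q x) • Xpq p q x α) * (g (pqnorm p q x) • Xpq p q x β)
      - (g (pqnorm p q x) • Xpq p q x β) * (g (pqnorm p q x) • Xpq p q x α)
      = (g (pqnorm p q x) ^ 2) • (Spq p q x α β - qform p q x • fpq p q α β) := by
    rw [← comm_XX]
    simp only [smul_mul_assoc, mul_smul_comm, smul_smul, smul_sub]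
    rw [← pow_two]
  rw [hcomm, Cfun, fpq_antisymm, ← sq_pqnorm hx, A2, B2, Spq]
  match_scalars <;> field_simp <;> ring
end main

section main2
variable {g : ℝ → ℝ}
  {B : (Fin (p + q) → ℝ) → Fin (p + q) → Matrix (Fin (p + q)) (Fin (p + q)) ℝ}

lemma hasDerivAt_A2 {r g1 g2 : ℝ} (hr : 0 < r) (h1 : HasDerivAt g g1 r)
    (h2 : HasDerivAt (deriv g) g2 r) :
    HasDerivAt (A2 g) ((g2 * r - deriv g r) / r ^ 2 + 2 * g r * g1) r := by
  have hd := (h2.div (hasDerivAt_id r) hr.ne').add (h1.pow 2)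
  have hd2 : HasDerivAt (A2 g) ((g2 * r - deriv g r * 1) / r ^ 2 + ((2:ℕ) * g r ^ (2-1) * g1)) r := by
    rw [show A2 g = fun s => deriv g s / s + g s ^ 2 from rfl]
    exact hd
  convert hd2 using 1
  push_cast
  ring

lemma hasDerivAt_B2 {r g1 : ℝ} (h1 : HasDerivAt g g1 r) :
    HasDerivAt (B2 g) (2 * g1 - (2 * r * g r ^ 2 + r ^ 2 * (2 * g r * g1))) r := by
  have hd := (h1.const_mul 2).sub (((hasDerivAt_id r).pow 2).mul (h1.pow 2))
  have hd2 : HasDerivAt (B2 g)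
      (2 * g1 - (((2:ℕ) * id r ^ (2-1) * 1) * g r ^ 2 + id r ^ 2 * ((2:ℕ) * g r ^ (2-1) * g1))) r := by
    rw [show B2 g = fun s => 2 * g s - s ^ 2 * g s ^ 2 from rfl]
    exact hd
  convert hd2 using 1
  push_cast [id]
  ring

lemma hasFDerivAt_Spq (α β : Fin (p + q)) (x : Fin (p + q) → ℝ) :
    HasFDerivAt (fun y => Spq p q y α β)
      (((epsP p α * x α) • XCLM p q β
          + (epsP p α • (ContinuousLinearMap.proj α : (Fin (p + q) → ℝ) →L[ℝ] ℝ)).smulRight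
            (Xpq p q x β))
        - ((epsP p β * x β) • XCLM p q α
          + (epsP p β • (ContinuousLinearMap.proj β : (Fin (p + q) → ℝ) →L[ℝ] ℝ)).smulRight
            (Xpq p q x α))) x := by
  have h1 : HasFDerivAt (fun y : Fin (p + q) → ℝ => epsP p α * y α)
      (epsP p α • (ContinuousLinearMap.proj α : (Fin (p + q) → ℝ) →L[ℝ] ℝ)) x :=
    (hasFDerivAt_apply α x).const_mul (epsP p α)
  have h2 : HasFDerivAt (fun y : Fin (p + q) → ℝ => epsP p β * y β)
      (epsP p β • (ContinuousLinearMap.proj β : (Fin (p + q) → ℝ) →L[ℝ] ℝ)) x :=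
    (hasFDerivAt_apply β x).const_mul (epsP p β)
  exact (h1.smul (hasFDerivAt_Xpq β x)).sub (h2.smul (hasFDerivAt_Xpq α x))

lemma fderiv_curv_single
    (hg : ContDiffOn ℝ (⊤ : ℕ∞) g (Set.Ioi 0))
    (hB : ∀ x, 0 < qform p q x → ∀ μ, B x μ = g (pqnorm p q x) • Xpq p q x μ)
    {x : Fin (p + q) → ℝ} (hx : 0 < qform p q x) (α β : Fin (p + q)) :
    fderiv ℝ (fun y => curv (p + q) B α β y) x (Pi.single β 1)
      = A2 g (pqnorm p q x) • ((if α = β then epsP p α else 0) • Xpq p q x β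
          - epsP p β • Xpq p q x α + (epsP p β * x β) • fpq p q α β)
        + (((deriv (deriv g) (pqnorm p q x) * pqnorm p q x - deriv g (pqnorm p q x))
              / (pqnorm p q x) ^ 2
            + 2 * g (pqnorm p q x) * deriv g (pqnorm p q x))
            * (epsP p β * x β) / pqnorm p q x) • Spq p q x α β
        + ((2 * deriv g (pqnorm p q x)
            - (2 * pqnorm p q x * g (pqnorm p q x) ^ 2
              + (pqnorm p q x) ^ 2 * (2 * g (pqnorm p q x) * deriv g (pqnorm p q x))))
            * (epsP p β * x β) / pqnorm p q x) • fpq p q α β := by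
  have hr : (0:ℝ) < pqnorm p q x := pqnorm_pos hx
  have hg' : ContDiffOn ℝ (⊤ : ℕ∞) (deriv g) (Set.Ioi 0) := hg.deriv_of_isOpen isOpen_Ioi (by simp)
  have hdg : ∀ s : ℝ, 0 < s → HasDerivAt g (deriv g s) s := fun s hs =>
    ((hg.contDiffAt (Ioi_mem_nhds hs)).differentiableAt (by simp)).hasDerivAt
  have hdg2 : HasDerivAt (deriv g) (deriv (deriv g) (pqnorm p q x)) (pqnorm p q x) :=
    ((hg'.contDiffAt (Ioi_mem_nhds hr)).differentiableAt (by simp)).hasDerivAt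
  have hev : (fun y => curv (p + q) B α β y) =ᶠ[nhds x] (fun y => Cfun p q g α β y) := by
    filter_upwards [isOpen_U.mem_nhds hx] with y hy
    exact curv_eq hB hy (hdg _ (pqnorm_pos hy)) α β
  have hA2 : HasFDerivAt (fun y => A2 g (pqnorm p q y))
      ((((deriv (deriv g) (pqnorm p q x) * pqnorm p q x - deriv g (pqnorm p q x))
            / (pqnorm p q x) ^ 2 + 2 * g (pqnorm p q x) * deriv g (pqnorm p q x))
          / pqnorm p q x) • dotCLM (Ipq p q *ᵥ x)) x :=
    hasFDerivAt_comp_pqnorm hx (hasDerivAt_A2 hr (hdg _ hr) hdg2)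
  have hB2 : HasFDerivAt (fun y => B2 g (pqnorm p q y))
      (((2 * deriv g (pqnorm p q x)
          - (2 * pqnorm p q x * g (pqnorm p q x) ^ 2
            + (pqnorm p q x) ^ 2 * (2 * g (pqnorm p q x) * deriv g (pqnorm p q x))))
          / pqnorm p q x) • dotCLM (Ipq p q *ᵥ x)) x :=
    hasFDerivAt_comp_pqnorm hx (hasDerivAt_B2 (hdg _ hr))
  have hC : HasFDerivAt (fun y => Cfun p q g α β y)
      ((A2 g (pqnorm p q x) • (((epsP p α * x α) • XCLM p q β
            + (epsP p α • (ContinuousLinearMap.proj α : (Fin (p + q) → ℝ) →L[ℝ] ℝ)).smulRight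
              (Xpq p q x β))
          - ((epsP p β * x β) • XCLM p q α
            + (epsP p β • (ContinuousLinearMap.proj β : (Fin (p + q) → ℝ) →L[ℝ] ℝ)).smulRight
              (Xpq p q x α)))
        + ((((deriv (deriv g) (pqnorm p q x) * pqnorm p q x - deriv g (pqnorm p q x))
              / (pqnorm p q x) ^ 2 + 2 * g (pqnorm p q x) * deriv g (pqnorm p q x))
            / pqnorm p q x) • dotCLM (Ipq p q *ᵥ x)).smulRight (Spq p q x α β))
        + (((2 * deriv g (pqnorm p q x)
          - (2 * pqnorm p q x * g (pqnorm p q x) ^ 2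
            + (pqnorm p q x) ^ 2 * (2 * g (pqnorm p q x) * deriv g (pqnorm p q x))))
          / pqnorm p q x) • dotCLM (Ipq p q *ᵥ x)).smulRight (fpq p q α β)) x :=
    (hA2.smul (hasFDerivAt_Spq α β x)).add (hB2.smul_const (fpq p q α β))
  rw [hev.fderiv_eq, hC.fderiv]
  simp only [ContinuousLinearMap.add_apply, ContinuousLinearMap.smul_apply,
    ContinuousLinearMap.smulRight_apply, ContinuousLinearMap.sub_apply,
    ContinuousLinearMap.proj_apply, XCLM_apply, Xpq_single, dotCLM_single,
    Pi.single_apply, fpq_same, smul_zero, smul_eq_mul]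
  rw [fpq_antisymm]
  match_scalars <;> (try split_ifs) <;> field_simp <;> simp
end main2

section main3
variable {g : ℝ → ℝ}
  {B : (Fin (p + q) → ℝ) → Fin (p + q) → Matrix (Fin (p + q)) (Fin (p + q)) ℝ}

lemma YM_LHS (hg : ContDiffOn ℝ (⊤ : ℕ∞) g (Set.Ioi 0))
    (hB : ∀ x, 0 < qform p q x → ∀ μ, B x μ = g (pqnorm p q x) • Xpq p q x μ)
    {x : Fin (p + q) → ℝ} (hx : 0 < qform p q x) (α : Fin (p + q)) :
    ∑ β, epsP p β • ((B x β * curv (p + q) B α β x - curv (p + q) B α β x * B x β)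
        + fderiv ℝ (fun y => curv (p + q) B α β y) x (Pi.single β 1))
      = (-(deriv (deriv g) (pqnorm p q x)
          + (((p + q : ℕ) : ℝ) + 1) * deriv g (pqnorm p q x) / pqnorm p q x
          + (((p + q : ℕ) : ℝ) - 2) * g (pqnorm p q x) ^ 2
            * (3 - (pqnorm p q x) ^ 2 * g (pqnorm p q x))))
        • Xpq p q x α := by
  have hr : (0:ℝ) < pqnorm p q x := pqnorm_pos hx
  have hg' : ContDiffOn ℝ (⊤ : ℕ∞) (deriv g) (Set.Ioi 0) := hg.deriv_of_isOpen isOpen_Ioi (by simp)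
  have hdg : HasDerivAt g (deriv g (pqnorm p q x)) (pqnorm p q x) :=
    ((hg.contDiffAt (Ioi_mem_nhds hr)).differentiableAt (by simp)).hasDerivAt
  have hper : ∀ β ∈ Finset.univ,
      epsP p β • ((B x β * curv (p + q) B α β x - curv (p + q) B α β x * B x β)
        + fderiv ℝ (fun y => curv (p + q) B α β y) x (Pi.single β 1))
      = (g (pqnorm p q x) * A2 g (pqnorm p q x))
          • (epsP p β • (Xpq p q x β * Spq p q x α β - Spq p q x α β * Xpq p q x β))
        + (g (pqnorm p q x) * B2 g (pqnorm p q x))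
          • (epsP p β • (Xpq p q x β * fpq p q α β - fpq p q α β * Xpq p q x β))
        + (((deriv (deriv g) (pqnorm p q x) * pqnorm p q x - deriv g (pqnorm p q x))
              / (pqnorm p q x) ^ 2
            + 2 * g (pqnorm p q x) * deriv g (pqnorm p q x)) / pqnorm p q x)
          • (x β • Spq p q x α β)
        + A2 g (pqnorm p q x)
          • (epsP p β • ((if α = β then epsP p α else 0) • Xpq p q x β
              - epsP p β • Xpq p q x α + (epsP p β * x β) • fpq p q α β))
        + ((2 * deriv g (pqnorm p q x)
            - (2 * pqnorm p q x * g (pqnorm p q x) ^ 2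
              + (pqnorm p q x) ^ 2 * (2 * g (pqnorm p q x) * deriv g (pqnorm p q x))))
            / pqnorm p q x)
          • (x β • fpq p q α β) := by
    intro β _
    rw [curv_eq hB hx hdg α β, fderiv_curv_single hg hB hx α β, hB x hx β]
    rw [Cfun]
    simp only [mul_add, add_mul, mul_sub, sub_mul, smul_add, smul_sub, smul_mul_assoc,
      mul_smul_comm, smul_smul]
    by_cases hb : (β : ℕ) < p <;> simp only [epsP, hb, if_true, if_false] <;>
      match_scalars <;> (try split_ifs) <;> field_simp <;> ring
  rw [Finset.sum_congr rfl hper]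
  simp only [Finset.sum_add_distrib]
  rw [← Finset.smul_sum, ← Finset.smul_sum, ← Finset.smul_sum, ← Finset.smul_sum,
    ← Finset.smul_sum, sum_eps_comm_Spq, sum_eps_comm_fpq, sum_x_Spq, sum_DS, sum_x_fpq]
  rw [smul_zero, ← sq_pqnorm hx, A2, B2]
  match_scalars
  field_simp
  ring
end main3

end YM2

theorem stmt17 (p q : ℕ) (hp : 1 ≤ p) (hq : 1 ≤ q) (hn : 5 ≤ p + q)
    (g : ℝ → ℝ) (hg : ContDiffOn ℝ (⊤ : ℕ∞) g (Set.Ioi 0))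
    (B : (Fin (p + q) → ℝ) → Fin (p + q) → Matrix (Fin (p + q)) (Fin (p + q)) ℝ)
    (hB : ∀ x, 0 < qform p q x → ∀ μ, B x μ = g (pqnorm p q x) • Xpq p q x μ) :
    YangMillsPQ p q B ↔
      ∀ r : ℝ, 0 < r →
        deriv (deriv g) r + (((p + q : ℕ) : ℝ) + 1) * deriv g r / r
          + (((p + q : ℕ) : ℝ) - 2) * g r ^ 2 * (3 - r ^ 2 * g r) = 0 := by
  constructor
  · intro hym r hr
    have h0p : (0 : ℕ) < p + q := by omega
    have h1p : (1 : ℕ) < p + q := by omega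
    set i0 : Fin (p + q) := ⟨0, h0p⟩ with hi0
    set α1 : Fin (p + q) := ⟨1, h1p⟩ with hα1
    set x : Fin (p + q) → ℝ := Pi.single i0 r with hxdef
    have hne : α1 ≠ i0 := by simp [hα1, hi0, Fin.ext_iff]
    have heps0 : epsP p i0 = 1 := by simp [epsP, hi0]; omega
    have hq1 : qform p q x = r ^ 2 := by
      rw [YM2.qform_eq_sum, hxdef]
      simp [Pi.single_apply, ite_mul, mul_ite, Finset.sum_ite_eq, heps0]
      ring
    have hx : 0 < qform p q x := by rw [hq1]; positivity
    have hpq : pqnorm p q x = r := by rw [pqnorm, hq1, Real.sqrt_sq hr.le]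
    have hX : Xpq p q x α1 = r • fpq p q i0 α1 := by
      rw [Xpq, hxdef]
      simp [Pi.single_apply, ite_smul, Finset.sum_ite_eq]
    have hmain := YM2.YM_LHS hg hB hx α1
    rw [hym α1 x hx, hpq] at hmain
    have hentry := congrFun (congrFun hmain.symm i0) α1
    rw [hX] at hentry
    have hfval : fpq p q i0 α1 i0 α1 = epsP p α1 := by
      rw [YM.fpq_apply]
      simp [hne, Ne.symm hne]
    simp only [Matrix.zero_apply, Matrix.smul_apply, smul_eq_mul, hfval] at hentry
    have hε := YM.epsP_ne (q := q) α1
    have : -(deriv (deriv g) r + (((p + q : ℕ) : ℝ) + 1) * deriv g r / r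
        + (((p + q : ℕ) : ℝ) - 2) * g r ^ 2 * (3 - r ^ 2 * g r)) * (r * epsP p α1) = 0 := by
      linarith [hentry]
    have hrne : r ≠ 0 := hr.ne'
    have hprod : r * epsP p α1 ≠ 0 := mul_ne_zero hrne hε
    have := mul_eq_zero.mp this
    rcases this with h | h
    · linarith [neg_eq_zero.mp h]
    · exact absurd h hprod
  · intro hode α x hx
    rw [YM2.YM_LHS hg hB hx α, hode (pqnorm p q x) (YM2.pqnorm_pos hx), neg_zero,
      zero_smul]
end
end

section
/- Let n ≥ 4 and let X : ℝⁿ → so(n) be a map satisfying X(R·x) = R X(x) R⁻¹ for every R ∈ SO(n) and every x ∈ ℝⁿ. Then X(x) = 0 for every x ∈ ℝⁿ. -/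
/-!
If `R` fixes `x`, equivariance says that `X x` commutes with `R`. For `x = c • eᵢ₀` the
stabiliser contains the diagonal matrices with entries `-1` at two coordinates `m, k ≠ i₀`;
conjugating by one of them negates exactly the entries `(i, j)` with one of `i, j` in `{m, k}`.
When `n ≥ 4`, for every `i ≠ j` we can choose `m ∈ {i, j} \ {i₀}` and `k ∉ {i₀, i, j}`, so all
off-diagonal entries of `X x` vanish, and skew-symmetry kills the diagonal. Finally `SO(n)` acts
transitively on spheres, so every `x` is `R (c • eᵢ₀)` and `X x = R X (c • eᵢ₀) R⁻¹ = 0`.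
-/

open Matrix

section
variable {ι : Type*} [DecidableEq ι]

/-- For `m ≠ k`, `diagonal (pairSign m k)` is the rotation by `π` in the `(m, k)` coordinate
plane. -/
def pairSign (m k : ι) (a : ι) : ℝ := if a = m ∨ a = k then -1 else 1

theorem pairSign_mul_self (m k a : ι) : pairSign m k a * pairSign m k a = 1 := by
  unfold pairSign; split_ifs <;> norm_num

variable [Fintype ι]

theorem diagonal_mem_orthogonalGroup {ε : ι → ℝ} (hε : ∀ i, ε i * ε i = 1) :
    diagonal ε ∈ orthogonalGroup ι ℝ := by
  rw [mem_orthogonalGroup_iff', diagonal_transpose, diagonal_mul_diagonal, funext hε]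
  exact diagonal_one

theorem prod_pairSign {m k : ι} (hmk : m ≠ k) : ∏ a, pairSign m k a = 1 := by
  have : ∀ a, pairSign m k a = if a ∈ ({m, k} : Finset ι) then -1 else 1 := by simp [pairSign]
  simp only [this, Finset.prod_ite_mem, Finset.univ_inter, Finset.prod_const,
    Finset.card_pair hmk]
  norm_num

theorem diagonal_pairSign_mem_specialOrthogonalGroup {m k : ι} (hmk : m ≠ k) :
    diagonal (pairSign m k) ∈ specialOrthogonalGroup ι ℝ :=
  mem_specialOrthogonalGroup_iff.2
    ⟨diagonal_mem_orthogonalGroup (pairSign_mul_self m k), by rw [det_diagonal, prod_pairSign hmk]⟩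

theorem diagonal_pairSign_mulVec_single {m k i : ι} (hm : i ≠ m) (hk : i ≠ k) (c : ℝ) :
    diagonal (pairSign m k) *ᵥ Pi.single i c = Pi.single i c := by
  rw [diagonal_mulVec_single, pairSign, if_neg (by tauto), one_mul]

theorem diagonal_pairSign_mul_self (m k : ι) :
    diagonal (pairSign m k) * diagonal (pairSign m k) = 1 := by
  rw [diagonal_mul_diagonal, funext (pairSign_mul_self m k)]
  exact diagonal_one

theorem diagonal_pairSign_conj_apply (m k : ι) (A : Matrix ι ι ℝ) (i j : ι) :
    (diagonal (pairSign m k) * A * diagonal (pairSign m k)) i j =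
      pairSign m k i * pairSign m k j * A i j := by
  rw [mul_diagonal, diagonal_mul]; ring

theorem eq_zero_of_pairSign_conj_eq (hι : 4 ≤ Fintype.card ι) {A : Matrix ι ι ℝ} (hA : Aᵀ = -A)
    (i₀ : ι) (h : ∀ m k, m ≠ k → m ≠ i₀ → k ≠ i₀ →
      diagonal (pairSign m k) * A * diagonal (pairSign m k) = A) :
    A = 0 := by
  ext i j
  rcases eq_or_ne i j with rfl | hij
  · have hii := congr_fun₂ hA i i
    rw [transpose_apply, neg_apply] at hii
    rw [Matrix.zero_apply]
    linarith
  obtain ⟨k, -, hk⟩ := Finset.exists_mem_notMem_of_card_lt_card (s := {i₀, i, j})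
    (t := Finset.univ)
    (by rw [Finset.card_univ]; linarith [Finset.card_le_three (a := i₀) (b := i) (c := j)])
  simp only [Finset.mem_insert, Finset.mem_singleton, not_or] at hk
  obtain ⟨hki₀, hki, hkj⟩ := hk
  set m := if i = i₀ then j else i with hm
  have hmi₀ : m ≠ i₀ := by
    rw [hm]; split_ifs with hi
    · exact hi ▸ hij.symm
    · exact hi
  have hmk : m ≠ k := by
    rw [hm]; split_ifs
    · exact Ne.symm hkj
    · exact Ne.symm hki
  have hsign : pairSign m k i * pairSign m k j = -1 := by
    rw [hm]; split_ifs <;> simp [pairSign, hij, hij.symm, Ne.symm hki, Ne.symm hkj]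
  have hij' := congr_fun₂ (h m k hmk hmi₀ hki₀) i j
  rw [diagonal_pairSign_conj_apply, hsign] at hij'
  rw [Matrix.zero_apply]
  linarith

theorem exists_orthogonal_mulVec_single (i₀ : ι) (x : ι → ℝ) :
    ∃ R ∈ orthogonalGroup ι ℝ, ∃ c : ℝ, R *ᵥ Pi.single i₀ c = x := by
  rcases eq_or_ne x 0 with rfl | hx
  · exact ⟨1, one_mem _, 0, by simp⟩
  set c := ‖WithLp.toLp 2 x‖
  have hc : c ≠ 0 := by simpa [c] using hx
  have hu : Orthonormal ℝ (({i₀} : Set ι).domRestrict fun _ => c⁻¹ • WithLp.toLp 2 x) := by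
    rw [orthonormal_subsingleton_iff]
    intro _
    simp [Set.domRestrict, norm_smul, c, hc]
  obtain ⟨b, hb⟩ := hu.exists_orthonormalBasis_extension_of_card_eq finrank_euclideanSpace
  refine ⟨(EuclideanSpace.basisFun ι ℝ).toBasis.toMatrix b,
    (EuclideanSpace.basisFun ι ℝ).toMatrix_orthonormalBasis_mem_orthogonal b, c, ?_⟩
  ext a
  simp [mulVec_single, Module.Basis.toMatrix_apply, hb i₀ rfl]
  field_simp

theorem exists_specialOrthogonal_mulVec_single [Nontrivial ι] (i₀ : ι) (x : ι → ℝ) :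
    ∃ R ∈ specialOrthogonalGroup ι ℝ, ∃ c : ℝ, R *ᵥ Pi.single i₀ c = x := by
  obtain ⟨R, hR, c, rfl⟩ := exists_orthogonal_mulVec_single i₀ x
  obtain ⟨i₁, hi₁⟩ := exists_ne i₀
  have hdet : R.det * R.det = 1 := by simpa using (det_of_mem_unitary hR).1
  -- a reflection in a coordinate hyperplane through `Pi.single i₀ 1` corrects the determinant
  set ε := Function.update (1 : ι → ℝ) i₁ R.det
  have hε : ∀ a, ε a * ε a = 1 := by
    intro a; rcases eq_or_ne a i₁ with rfl | ha <;> simp [ε, *]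
  refine ⟨R * diagonal ε, mem_specialOrthogonalGroup_iff.2
    ⟨mul_mem hR (diagonal_mem_orthogonalGroup hε), ?_⟩, c, ?_⟩
  · rw [det_mul, det_diagonal, Finset.prod_update_of_mem (Finset.mem_univ _)]
    simpa using hdet
  · rw [← mulVec_mulVec, diagonal_mulVec_single]
    simp [ε, hi₁.symm]

theorem apply_single_eq_zero_of_conj_equivariant (hι : 4 ≤ Fintype.card ι)
    {X : (ι → ℝ) → Matrix ι ι ℝ} (hskew : ∀ x, (X x)ᵀ = -X x)
    (hequiv : ∀ R ∈ specialOrthogonalGroup ι ℝ, ∀ x, X (R *ᵥ x) = R * X x * R⁻¹)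
    (i₀ : ι) (c : ℝ) : X (Pi.single i₀ c) = 0 :=
  eq_zero_of_pairSign_conj_eq hι (hskew _) i₀ fun m k hmk hm hk => by
    have h := hequiv _ (diagonal_pairSign_mem_specialOrthogonalGroup hmk) (Pi.single i₀ c)
    rwa [diagonal_pairSign_mulVec_single hm.symm hk.symm,
      inv_eq_right_inv (diagonal_pairSign_mul_self m k), eq_comm] at h

theorem eq_zero_of_conj_equivariant (hι : 4 ≤ Fintype.card ι)
    {X : (ι → ℝ) → Matrix ι ι ℝ} (hskew : ∀ x, (X x)ᵀ = -X x)
    (hequiv : ∀ R ∈ specialOrthogonalGroup ι ℝ, ∀ x, X (R *ᵥ x) = R * X x * R⁻¹)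
    (x : ι → ℝ) : X x = 0 := by
  have : Nontrivial ι := Fintype.one_lt_card_iff_nontrivial.1 (by omega)
  obtain ⟨i₀⟩ : Nonempty ι := inferInstance
  obtain ⟨R, hR, c, rfl⟩ := exists_specialOrthogonal_mulVec_single i₀ x
  rw [hequiv R hR, apply_single_eq_zero_of_conj_equivariant hι hskew hequiv, mul_zero, zero_mul]

end

theorem stmt19 (n : ℕ) (hn : 4 ≤ n)
    (X : (Fin n → ℝ) → Matrix (Fin n) (Fin n) ℝ)
    (hskew : ∀ x, (X x)ᵀ = -(X x))
    (hequiv : ∀ R : Matrix (Fin n) (Fin n) ℝ, Rᵀ * R = 1 → R.det = 1 →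
      ∀ x : Fin n → ℝ, X (R *ᵥ x) = R * X x * R⁻¹) :
    ∀ x : Fin n → ℝ, X x = 0 :=
  eq_zero_of_conj_equivariant (by simpa using hn) hskew fun R hR =>
    hequiv R ((mem_orthogonalGroup_iff' _ _).1 (mem_specialOrthogonalGroup_iff.1 hR).1)
      (mem_specialOrthogonalGroup_iff.1 hR).2
end
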